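/- arXiv:2502.08965 — 3 statements merged into one kernel-verified Lean document; each statement's English description precedes it below -/
import Mathlib

section
/- For every n ≥ 2, the canonical monoid homomorphism from the singular twisted virtual braid monoid STVB_n to the singular twisted virtual group STVG_n, sending σ_i ↦ σ_i, σ̄_i ↦ σ_i⁻¹, ρ_i ↦ ρ_i, τ_i ↦ τ_i and γ_j ↦ γ_j, is well defined and injective; that is, STVB_n embeds in the group STVG_n. -/
namespace SingTVB

/-- Generators of the singular twisted virtual braid monoid `STVB n`
(0-based indexing: `sig i` is the paper's σ_{i+1}, `gam j` is the paper's γ_{j+1}). -/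
inductive Gen (n : ℕ) : Type
  | sig : Fin (n - 1) → Gen n
  | sigb : Fin (n - 1) → Gen n
  | rho : Fin (n - 1) → Gen n
  | tau : Fin (n - 1) → Gen n
  | gam : Fin n → Gen n

abbrev FM (n : ℕ) := FreeMonoid (Gen n)

/-- The strand `i` (lower strand of the `i`-th crossing), as an element of `Fin n`. -/
def fa {n : ℕ} (i : Fin (n - 1)) : Fin n := ⟨i.val, by have := i.isLt; omega⟩
/-- The strand `i+1` (upper strand of the `i`-th crossing), as an element of `Fin n`. -/
def fb {n : ℕ} (i : Fin (n - 1)) : Fin n := ⟨i.val + 1, by have := i.isLt; omega⟩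

def Ws {n : ℕ} (i : Fin (n - 1)) : FM n := FreeMonoid.of (Gen.sig i)
def Wsb {n : ℕ} (i : Fin (n - 1)) : FM n := FreeMonoid.of (Gen.sigb i)
def Wr {n : ℕ} (i : Fin (n - 1)) : FM n := FreeMonoid.of (Gen.rho i)
def Wt {n : ℕ} (i : Fin (n - 1)) : FM n := FreeMonoid.of (Gen.tau i)
def Wg {n : ℕ} (j : Fin n) : FM n := FreeMonoid.of (Gen.gam j)

/-- `|i - j| > 1`. -/
def Far {m : ℕ} (i j : Fin m) : Prop := i.val + 1 < j.val ∨ j.val + 1 < i.val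

/-- Defining relations of the singular twisted virtual braid monoid. -/
inductive Rel (n : ℕ) : FM n → FM n → Prop
  | ss {i j : Fin (n - 1)} (h : Far i j) : Rel n (Ws i * Ws j) (Ws j * Ws i)
  | rr {i j : Fin (n - 1)} (h : Far i j) : Rel n (Wr i * Wr j) (Wr j * Wr i)
  | sr {i j : Fin (n - 1)} (h : Far i j) : Rel n (Ws i * Wr j) (Wr j * Ws i)
  | tt {i j : Fin (n - 1)} (h : Far i j) : Rel n (Wt i * Wt j) (Wt j * Wt i)
  | st {i j : Fin (n - 1)} (h : Far i j) : Rel n (Ws i * Wt j) (Wt j * Ws i)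
  | tr {i j : Fin (n - 1)} (h : Far i j) : Rel n (Wt i * Wr j) (Wr j * Wt i)
  | sss {i j : Fin (n - 1)} (h : j.val = i.val + 1) :
      Rel n (Ws i * Ws j * Ws i) (Ws j * Ws i * Ws j)
  | rrr {i j : Fin (n - 1)} (h : j.val = i.val + 1) :
      Rel n (Wr i * Wr j * Wr i) (Wr j * Wr i * Wr j)
  | rsr {i j : Fin (n - 1)} (h : j.val = i.val + 1) :
      Rel n (Wr i * Ws j * Wr i) (Wr j * Ws i * Wr j)
  | rtr {i j : Fin (n - 1)} (h : j.val = i.val + 1) :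
      Rel n (Wr i * Wt j * Wr i) (Wr j * Wt i * Wr j)
  | sst {i j : Fin (n - 1)} (h : j.val = i.val + 1) :
      Rel n (Ws i * Ws j * Wt i) (Wt j * Ws i * Ws j)
  | sst' {i j : Fin (n - 1)} (h : j.val = i.val + 1) :
      Rel n (Ws j * Ws i * Wt j) (Wt i * Ws j * Ws i)
  | rho2 (i : Fin (n - 1)) : Rel n (Wr i * Wr i) 1
  | ssb (i : Fin (n - 1)) : Rel n (Ws i * Wsb i) 1
  | sbs (i : Fin (n - 1)) : Rel n (Wsb i * Ws i) 1
  | stc (i : Fin (n - 1)) : Rel n (Ws i * Wt i) (Wt i * Ws i)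
  | grel (i : Fin (n - 1)) : Rel n (Wg (fb i) * Wr i) (Wr i * Wg (fa i))
  | rsrg (i : Fin (n - 1)) :
      Rel n (Wr i * Ws i * Wr i) (Wg (fb i) * Wg (fa i) * Ws i * Wg (fa i) * Wg (fb i))
  | rtrg (i : Fin (n - 1)) :
      Rel n (Wr i * Wt i * Wr i) (Wg (fb i) * Wg (fa i) * Wt i * Wg (fa i) * Wg (fb i))
  | g2 (j : Fin n) : Rel n (Wg j * Wg j) 1
  | gg (i j : Fin n) : Rel n (Wg i * Wg j) (Wg j * Wg i)
  | grc {i : Fin (n - 1)} {j : Fin n} (h1 : j ≠ fa i) (h2 : j ≠ fb i) :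
      Rel n (Wg j * Wr i) (Wr i * Wg j)
  | sgc {i : Fin (n - 1)} {j : Fin n} (h1 : j ≠ fa i) (h2 : j ≠ fb i) :
      Rel n (Ws i * Wg j) (Wg j * Ws i)
  | tgc {i : Fin (n - 1)} {j : Fin n} (h1 : j ≠ fa i) (h2 : j ≠ fb i) :
      Rel n (Wt i * Wg j) (Wg j * Wt i)

/-- The singular twisted virtual braid monoid on `n` strands. -/
abbrev STVB (n : ℕ) := PresentedMonoid (Rel n)

def mkS (n : ℕ) : FM n →* STVB n := PresentedMonoid.mk (Rel n)

def sigE (n : ℕ) (i : Fin (n - 1)) : STVB n := mkS n (Ws i)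
def sigbE (n : ℕ) (i : Fin (n - 1)) : STVB n := mkS n (Wsb i)
def rhoE (n : ℕ) (i : Fin (n - 1)) : STVB n := mkS n (Wr i)
def tauE (n : ℕ) (i : Fin (n - 1)) : STVB n := mkS n (Wt i)
def gamE (n : ℕ) (j : Fin n) : STVB n := mkS n (Wg j)

/-- The transposition `(i, i+1)` in the symmetric group on `Fin n`. -/
def swp {n : ℕ} (i : Fin (n - 1)) : Equiv.Perm (Fin n) := Equiv.swap (fa i) (fb i)

end SingTVB
namespace SingTVG

/-- Generators of the singular twisted virtual group `STVG n` (0-based indexing). -/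
inductive GGen (n : ℕ) : Type
  | sig : Fin (n - 1) → GGen n
  | rho : Fin (n - 1) → GGen n
  | tau : Fin (n - 1) → GGen n
  | taub : Fin (n - 1) → GGen n
  | gam : Fin n → GGen n

abbrev FG (n : ℕ) := FreeGroup (GGen n)

def fa {n : ℕ} (i : Fin (n - 1)) : Fin n := ⟨i.val, by have := i.isLt; omega⟩
def fb {n : ℕ} (i : Fin (n - 1)) : Fin n := ⟨i.val + 1, by have := i.isLt; omega⟩

def ws {n : ℕ} (i : Fin (n - 1)) : FG n := FreeGroup.of (GGen.sig i)
def wr {n : ℕ} (i : Fin (n - 1)) : FG n := FreeGroup.of (GGen.rho i)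
def wt {n : ℕ} (i : Fin (n - 1)) : FG n := FreeGroup.of (GGen.tau i)
def wtb {n : ℕ} (i : Fin (n - 1)) : FG n := FreeGroup.of (GGen.taub i)
def wg {n : ℕ} (j : Fin n) : FG n := FreeGroup.of (GGen.gam j)

/-- `|i - j| > 1`. -/
def Far {m : ℕ} (i j : Fin m) : Prop := i.val + 1 < j.val ∨ j.val + 1 < i.val

/-- Defining relations of `STVG n`, as pairs of equal words. -/
inductive GRel (n : ℕ) : FG n → FG n → Prop
  | ss {i j : Fin (n - 1)} (h : Far i j) : GRel n (ws i * ws j) (ws j * ws i)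
  | rr {i j : Fin (n - 1)} (h : Far i j) : GRel n (wr i * wr j) (wr j * wr i)
  | sr {i j : Fin (n - 1)} (h : Far i j) : GRel n (ws i * wr j) (wr j * ws i)
  | tt {i j : Fin (n - 1)} (h : Far i j) : GRel n (wt i * wt j) (wt j * wt i)
  | st {i j : Fin (n - 1)} (h : Far i j) : GRel n (ws i * wt j) (wt j * ws i)
  | tr {i j : Fin (n - 1)} (h : Far i j) : GRel n (wt i * wr j) (wr j * wt i)
  | tbtb {i j : Fin (n - 1)} (h : Far i j) : GRel n (wtb i * wtb j) (wtb j * wtb i)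
  | tbt {i j : Fin (n - 1)} (h : Far i j) : GRel n (wtb i * wt j) (wt j * wtb i)
  | stb {i j : Fin (n - 1)} (h : Far i j) : GRel n (ws i * wtb j) (wtb j * ws i)
  | tbr {i j : Fin (n - 1)} (h : Far i j) : GRel n (wtb i * wr j) (wr j * wtb i)
  | sss {i j : Fin (n - 1)} (h : j.val = i.val + 1) :
      GRel n (ws i * ws j * ws i) (ws j * ws i * ws j)
  | rrr {i j : Fin (n - 1)} (h : j.val = i.val + 1) :
      GRel n (wr i * wr j * wr i) (wr j * wr i * wr j)
  | rsr {i j : Fin (n - 1)} (h : j.val = i.val + 1) :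
      GRel n (wr i * ws j * wr i) (wr j * ws i * wr j)
  | rtr {i j : Fin (n - 1)} (h : j.val = i.val + 1) :
      GRel n (wr i * wt j * wr i) (wr j * wt i * wr j)
  | rtbr {i j : Fin (n - 1)} (h : j.val = i.val + 1) :
      GRel n (wr i * wtb j * wr i) (wr j * wtb i * wr j)
  | sst {i j : Fin (n - 1)} (h : j.val = i.val + 1) :
      GRel n (ws i * ws j * wt i) (wt j * ws i * ws j)
  | sst' {i j : Fin (n - 1)} (h : j.val = i.val + 1) :
      GRel n (ws j * ws i * wt j) (wt i * ws j * ws i)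
  | sstb {i j : Fin (n - 1)} (h : j.val = i.val + 1) :
      GRel n (ws i * ws j * wtb i) (wtb j * ws i * ws j)
  | sstb' {i j : Fin (n - 1)} (h : j.val = i.val + 1) :
      GRel n (ws j * ws i * wtb j) (wtb i * ws j * ws i)
  | rho2 (i : Fin (n - 1)) : GRel n (wr i * wr i) 1
  | stc (i : Fin (n - 1)) : GRel n (ws i * wt i) (wt i * ws i)
  | stbc (i : Fin (n - 1)) : GRel n (ws i * wtb i) (wtb i * ws i)
  | grel (i : Fin (n - 1)) : GRel n (wg (fb i) * wr i) (wr i * wg (fa i))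
  | rsrg (i : Fin (n - 1)) :
      GRel n (wr i * ws i * wr i) (wg (fb i) * wg (fa i) * ws i * wg (fa i) * wg (fb i))
  | rtrg (i : Fin (n - 1)) :
      GRel n (wr i * wt i * wr i) (wg (fb i) * wg (fa i) * wt i * wg (fa i) * wg (fb i))
  | rtbrg (i : Fin (n - 1)) :
      GRel n (wr i * wtb i * wr i) (wg (fb i) * wg (fa i) * wtb i * wg (fa i) * wg (fb i))
  | tbt1 (i : Fin (n - 1)) : GRel n (wtb i * wt i) 1
  | g2 (j : Fin n) : GRel n (wg j * wg j) 1
  | ggc (i j : Fin n) : GRel n (wg i * wg j) (wg j * wg i)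
  | grc {i : Fin (n - 1)} {j : Fin n} (h1 : j ≠ fa i) (h2 : j ≠ fb i) :
      GRel n (wg j * wr i) (wr i * wg j)
  | sgc {i : Fin (n - 1)} {j : Fin n} (h1 : j ≠ fa i) (h2 : j ≠ fb i) :
      GRel n (ws i * wg j) (wg j * ws i)
  | tgc {i : Fin (n - 1)} {j : Fin n} (h1 : j ≠ fa i) (h2 : j ≠ fb i) :
      GRel n (wt i * wg j) (wg j * wt i)
  | tbgc {i : Fin (n - 1)} {j : Fin n} (h1 : j ≠ fa i) (h2 : j ≠ fb i) :
      GRel n (wtb i * wg j) (wg j * wtb i)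

/-- The set of relators `u * v⁻¹` for the relations `u = v` of `STVG n`. -/
def grels (n : ℕ) : Set (FG n) := {x | ∃ u v : FG n, GRel n u v ∧ x = u * v⁻¹}

/-- The singular twisted virtual group on `n` strands. -/
abbrev STVG (n : ℕ) := PresentedGroup (grels n)

def sigG (n : ℕ) (i : Fin (n - 1)) : STVG n := PresentedGroup.of (GGen.sig i)
def rhoG (n : ℕ) (i : Fin (n - 1)) : STVG n := PresentedGroup.of (GGen.rho i)
def tauG (n : ℕ) (i : Fin (n - 1)) : STVG n := PresentedGroup.of (GGen.tau i)
def taubG (n : ℕ) (i : Fin (n - 1)) : STVG n := PresentedGroup.of (GGen.taub i)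
def gamG (n : ℕ) (j : Fin n) : STVG n := PresentedGroup.of (GGen.gam j)

/-- The transposition `(i, i+1)` in the symmetric group on `Fin n`. -/
def swpG {n : ℕ} (i : Fin (n - 1)) : Equiv.Perm (Fin n) := Equiv.swap (fa i) (fb i)

end SingTVG

/-!
Write `M = STVB n`. The units `σᵢ, ρᵢ, γⱼ` of `M` act by conjugation on `M`, hence on the
right-angled Artin group `Γ(M)` of the commutation graph of `M`. Sending `σᵢ, ρᵢ, γⱼ` to
themselves in `Mˣ` and `τᵢ` to the letter `τᵢ` of `Γ(M)` respects the relations of `STVG n`, each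
of which becomes a relation of `M` read either in `Mˣ` or as a conjugation identity; this gives
`STVG n →* Γ(M) ⋊ Mˣ`. Its composite `θ` with the canonical map is injective: every `m : M` is
`x₁ ⋯ xₖ * u` with the `xᵢ` conjugates of `τ`'s and `u` a unit, and `θ m = (x₁ ⋯ xₖ, u)`. Two words
`x₁ ⋯ xₖ` equal in `Γ(M)` have equal projections to the free groups on pairs of non-commuting
letters, so one is obtained from the other by swapping adjacent commuting letters, and their
products in `M` agree.
-/

theorem FreeGroup.prod_map_of_eq_mk {α : Type*} (L : List α) :
    (L.map FreeGroup.of).prod = FreeGroup.mk (L.map (·, true)) := by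
  induction L with
  | nil => rfl
  | cons a L ih => rw [List.map_cons, List.prod_cons, ih, FreeGroup.of, FreeGroup.mul_mk]; rfl

theorem FreeGroup.prod_map_of_injective {α : Type*} :
    Function.Injective fun L : List α => (L.map FreeGroup.of).prod := by
  classical
  intro L₁ L₂ h
  have hred (L : List α) : FreeGroup.IsReduced (L.map (·, true)) :=
    List.isChain_map_of_isChain (R := fun _ _ => True) _ (fun _ _ _ _ => rfl)
      (List.Pairwise.isChain (List.pairwise_of_forall fun _ _ => trivial))
  have := congrArg FreeGroup.toWord h
  simp only [FreeGroup.prod_map_of_eq_mk, FreeGroup.toWord_mk, (hred _).reduce_eq] at this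
  exact List.map_injective_iff.mpr (fun _ _ h => congrArg Prod.fst h) this

namespace List

variable {M : Type*} [Monoid M] [DecidableEq M]

theorem commute_of_forall_filter_eq {a : M} {u v₁ v₂ : List M} (ha : a ∉ v₁)
    (h : ∀ b, ¬Commute a b → (a :: u).filter (fun c => c = a ∨ c = b) =
      (v₁ ++ a :: v₂).filter (fun c => c = a ∨ c = b)) :
    ∀ b ∈ v₁, Commute a b := by
  intro b hb
  by_contra hab
  have h := h b hab
  obtain ⟨x, xs, hx⟩ : ∃ x xs, v₁.filter (fun c => c = a ∨ c = b) = x :: xs :=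
    exists_cons_of_ne_nil (ne_nil_of_mem (by simpa using hb : b ∈ _))
  rw [filter_append, hx] at h
  have hxa : a = x := by simpa using congrArg head? h
  exact ha (hxa ▸ mem_of_mem_filter (hx ▸ mem_cons_self))

theorem filter_eq_of_filter_cons_eq {a a' b' : M} {u v₁ v₂ : List M} (ha : a ∉ v₁)
    (hcomm : ∀ b ∈ v₁, Commute a b) (hab' : Commute a' b' → a' = b')
    (h : (a :: u).filter (fun c => c = a' ∨ c = b') =
      (v₁ ++ a :: v₂).filter (fun c => c = a' ∨ c = b')) :
    u.filter (fun c => c = a' ∨ c = b') = (v₁ ++ v₂).filter (fun c => c = a' ∨ c = b') := by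
  by_cases hpa : a = a' ∨ a = b'
  · have hv₁ : v₁.filter (fun c => c = a' ∨ c = b') = [] := by
      refine filter_eq_nil_iff.mpr fun c hc hpc => ?_
      have hca : c ≠ a := fun hca => ha (hca ▸ hc)
      have hac := hcomm c hc
      simp only [decide_eq_true_eq] at hpc
      rcases hpa with rfl | rfl <;> rcases hpc with rfl | rfl
      exacts [hca rfl, hca (hab' hac).symm, hca (hab' hac.symm), hca rfl]
    rw [filter_append, hv₁] at h ⊢
    simpa [hpa] using h
  · simpa [filter_append, hpa] using h

/-- The projection lemma for partially commutative monoids. -/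
theorem prod_eq_of_forall_filter_eq {u v : List M}
    (h : ∀ a b : M, (Commute a b → a = b) →
      u.filter (fun c => c = a ∨ c = b) = v.filter (fun c => c = a ∨ c = b)) :
    u.prod = v.prod := by
  induction u generalizing v with
  | nil =>
    cases v with
    | nil => rfl
    | cons x v => simpa using h x x fun _ => rfl
  | cons a u ih =>
    have ha : a ∈ v := by
      have := h a a fun _ => rfl
      exact mem_of_mem_filter (this ▸ mem_filter.mpr ⟨mem_cons_self, by simp⟩)
    obtain ⟨v₁, v₂, ha₁, rfl, -⟩ := exists_erase_eq ha
    have hcomm := commute_of_forall_filter_eq ha₁ fun b hab => h a b fun hc => absurd hc hab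
    have hprod : (v₁ ++ a :: v₂).prod = a * (v₁ ++ v₂).prod := by
      rw [prod_append, prod_cons, ← mul_assoc, ← (Commute.list_prod_right v₁ a hcomm).eq,
        mul_assoc, prod_append]
    rw [prod_cons, hprod, ih fun a' b' hab' =>
      filter_eq_of_filter_cons_eq ha₁ hcomm hab' (h a' b' hab')]

end List

def Units.conj (M : Type*) [Monoid M] : Mˣ →* MulAut M :=
  (MulDistribMulAction.toMulAut (ConjAct Mˣ) M).comp ConjAct.toConjAct.toMonoidHom

@[simp] theorem Units.conj_apply {M : Type*} [Monoid M] (u : Mˣ) (x : M) :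
    Units.conj M u x = ↑u * x * ↑u⁻¹ := rfl

theorem SemidirectProduct.inr_mul_inl {N G : Type*} [Group N] [Group G] {φ : G →* MulAut N}
    (g : G) (n : N) : (inr g : N ⋊[φ] G) * inl n = inl (φ g n) * inr g := by
  ext <;> simp

open scoped commutatorElement in
def commutatorRels (M : Type*) [Monoid M] : Set (FreeGroup M) :=
  {r | ∃ a b : M, Commute a b ∧ r = (⁅FreeGroup.of a, FreeGroup.of b⁆ : FreeGroup M)}

/-- The right-angled Artin group on the commutation graph of `M`. -/
abbrev CommutationGroup (M : Type*) [Monoid M] := PresentedGroup (commutatorRels M)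

namespace CommutationGroup

open SemidirectProduct

variable {M N : Type*} [Monoid M] [Monoid N]

def of (x : M) : CommutationGroup M := PresentedGroup.of x

def lift {G : Type*} [Group G] (f : M → G) (hf : ∀ a b, Commute a b → Commute (f a) (f b)) :
    CommutationGroup M →* G :=
  PresentedGroup.toGroup (f := f) <| by
    rintro _ ⟨a, b, hab, rfl⟩
    simpa [commutatorElement_eq_one_iff_commute] using hf a b hab

@[simp] theorem lift_of {G : Type*} [Group G] (f : M → G)
    (hf : ∀ a b, Commute a b → Commute (f a) (f b)) (x : M) : lift f hf (of x) = f x :=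
  PresentedGroup.toGroup.of _

theorem lift_prod_map_of {G : Type*} [Group G] (f : M → G)
    (hf : ∀ a b, Commute a b → Commute (f a) (f b)) (L : List M) :
    lift f hf (L.map of).prod = (L.map f).prod := by
  simp [map_list_prod, Function.comp_def]

@[ext] theorem hom_ext {G : Type*} [Group G] {φ ψ : CommutationGroup M →* G}
    (h : ∀ x, φ (of x) = ψ (of x)) : φ = ψ :=
  PresentedGroup.ext h

theorem of_commute {a b : M} (h : Commute a b) : Commute (of a) (of b) := by
  rw [← commutatorElement_eq_one_iff_commute]
  exact PresentedGroup.one_of_mem ⟨a, b, h, rfl⟩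

def map (f : M →* N) : CommutationGroup M →* CommutationGroup N :=
  lift (fun x => of (f x)) fun _ _ h => of_commute (h.map f)

@[simp] theorem map_of (f : M →* N) (x : M) : map f (of x) = of (f x) := lift_of _ _ x

def mapAut : MulAut M →* MulAut (CommutationGroup M) where
  toFun e := MonoidHom.toMulEquiv (map e.toMonoidHom) (map e.symm.toMonoidHom)
    (by ext; simp) (by ext; simp)
  map_one' := MulEquiv.toMonoidHom_injective <| by ext; simp
  map_mul' _ _ := MulEquiv.toMonoidHom_injective <| by ext; simp

def conjAut (M : Type*) [Monoid M] : Mˣ →* MulAut (CommutationGroup M) :=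
  mapAut.comp (Units.conj M)

@[simp] theorem conjAut_of (u : Mˣ) (x : M) : conjAut M u (of x) = of (↑u * x * ↑u⁻¹) := by
  simp [conjAut, mapAut]

theorem of_conj_eq_of {u : Mˣ} {x y : M} (h : ↑u * x = y * ↑u) : of (↑u * x * ↑u⁻¹) = of y := by
  rw [h, Units.mul_inv_cancel_right]

theorem of_conj_conj_eq_of {u v : Mˣ} {x y : M} (h : ↑u * ↑v * x = y * ↑u * ↑v) :
    of (↑u * (↑v * x * ↑v⁻¹) * ↑u⁻¹) = of y := by
  simpa [mul_assoc] using of_conj_eq_of (u := u * v) (by simpa [mul_assoc] using h)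

section PairProj

variable [DecidableEq M]

def pairProj (a b : M) (hab : Commute a b → a = b) : CommutationGroup M →* FreeGroup M :=
  lift (fun c => if c = a ∨ c = b then FreeGroup.of c else 1) fun x y hxy => by
    by_cases hx : x = a ∨ x = b
    · by_cases hy : y = a ∨ y = b
      · suffices x = y by subst this; exact Commute.refl _
        rcases hx with rfl | rfl <;> rcases hy with rfl | rfl
        exacts [rfl, hab hxy, (hab hxy.symm).symm, rfl]
      · simp [hy]
    · simp [hx]

theorem pairProj_prod_map_of (a b : M) (hab : Commute a b → a = b) (L : List M) :
    pairProj a b hab (L.map of).prod =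
      ((L.filter (fun c => c = a ∨ c = b)).map FreeGroup.of).prod := by
  rw [pairProj, lift_prod_map_of]
  induction L with
  | nil => rfl
  | cons c L ih => by_cases hc : c = a ∨ c = b <;> simp [hc, ih]

end PairProj

theorem list_prod_eq_of_prod_map_of_eq {u v : List M}
    (h : (u.map of).prod = (v.map of).prod) : u.prod = v.prod := by
  classical
  refine List.prod_eq_of_forall_filter_eq fun a b hab => FreeGroup.prod_map_of_injective ?_
  simpa [pairProj_prod_map_of] using congrArg (pairProj a b hab) h

theorem exists_eq_list_prod_mul_units (θ : M →* CommutationGroup M ⋊[conjAut M] Mˣ) {X : Set M}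
    (hX : ∀ x ∈ X, (∃ u : Mˣ, ↑u = x ∧ θ x = inr u) ∨ θ x = inl (of x)) {m : M}
    (hm : m ∈ Submonoid.closure X) :
    ∃ (L : List M) (v : Mˣ), m = L.prod * v ∧ θ m = inl (L.map of).prod * inr v := by
  induction hm using Submonoid.closure_induction with
  | mem x hx =>
    rcases hX x hx with ⟨u, rfl, hu⟩ | hx
    · exact ⟨[], u, by simp, by simp [hu]⟩
    · exact ⟨[x], 1, by simp, by simp [hx]⟩
  | one => exact ⟨[], 1, by simp, by simp⟩
  | mul m₁ m₂ _ _ ih₁ ih₂ =>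
    obtain ⟨L₁, v₁, rfl, h₁⟩ := ih₁
    obtain ⟨L₂, v₂, rfl, h₂⟩ := ih₂
    refine ⟨L₁ ++ L₂.map (Units.conj M v₁), v₁ * v₂, ?_, ?_⟩
    · simp [← map_list_prod, mul_assoc]
    · have hconj : conjAut M v₁ (L₂.map of).prod = ((L₂.map (Units.conj M v₁)).map of).prod := by
        simp [map_list_prod, Function.comp_def]
      rw [map_mul, h₁, h₂, mul_assoc, ← mul_assoc (inr v₁), inr_mul_inl, hconj, List.map_append,
        List.prod_append, map_mul, map_mul]
      simp only [mul_assoc]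

theorem injective_of_closure_eq_top (θ : M →* CommutationGroup M ⋊[conjAut M] Mˣ) {X : Set M}
    (hX_top : Submonoid.closure X = ⊤)
    (hX : ∀ x ∈ X, (∃ u : Mˣ, ↑u = x ∧ θ x = inr u) ∨ θ x = inl (of x)) :
    Function.Injective θ := by
  intro a b hab
  obtain ⟨La, va, rfl, ha⟩ := exists_eq_list_prod_mul_units θ hX (hX_top ▸ Submonoid.mem_top a)
  obtain ⟨Lb, vb, rfl, hb⟩ := exists_eq_list_prod_mul_units θ hX (hX_top ▸ Submonoid.mem_top b)
  rw [ha, hb] at hab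
  have hv : va = vb := by simpa using congrArg right hab
  have hL : (La.map of).prod = (Lb.map of).prod := by simpa [hv] using congrArg left hab
  rw [list_prod_eq_of_prod_map_of_eq hL, hv]

end CommutationGroup

namespace SingTVB

variable {n : ℕ}

theorem mkS_eq_of_rel {u v : FM n} (h : Rel n u v) : mkS n u = mkS n v :=
  PresentedMonoid.mk_eq_mk_of_rel h

@[simp] theorem mkS_Ws (i : Fin (n - 1)) : mkS n (Ws i) = sigE n i := rfl
@[simp] theorem mkS_Wsb (i : Fin (n - 1)) : mkS n (Wsb i) = sigbE n i := rfl
@[simp] theorem mkS_Wr (i : Fin (n - 1)) : mkS n (Wr i) = rhoE n i := rfl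
@[simp] theorem mkS_Wt (i : Fin (n - 1)) : mkS n (Wt i) = tauE n i := rfl
@[simp] theorem mkS_Wg (j : Fin n) : mkS n (Wg j) = gamE n j := rfl

def sigUnit (i : Fin (n - 1)) : (STVB n)ˣ :=
  ⟨sigE n i, sigbE n i, by simpa using mkS_eq_of_rel (.ssb i),
    by simpa using mkS_eq_of_rel (.sbs i)⟩

def rhoUnit (i : Fin (n - 1)) : (STVB n)ˣ :=
  ⟨rhoE n i, rhoE n i, by simpa using mkS_eq_of_rel (.rho2 i),
    by simpa using mkS_eq_of_rel (.rho2 i)⟩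

def gamUnit (j : Fin n) : (STVB n)ˣ :=
  ⟨gamE n j, gamE n j, by simpa using mkS_eq_of_rel (.g2 j), by simpa using mkS_eq_of_rel (.g2 j)⟩

@[simp] theorem val_rhoUnit (i : Fin (n - 1)) : (rhoUnit i : STVB n) = rhoE n i := rfl
@[simp] theorem val_inv_rhoUnit (i : Fin (n - 1)) : ((rhoUnit i)⁻¹ : (STVB n)ˣ) = rhoE n i := rfl
@[simp] theorem val_gamUnit (j : Fin n) : (gamUnit j : STVB n) = gamE n j := rfl
@[simp] theorem val_inv_gamUnit (j : Fin n) : ((gamUnit j)⁻¹ : (STVB n)ˣ) = gamE n j := rfl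

@[simp] theorem rhoE_mul_rhoE (i : Fin (n - 1)) : rhoE n i * rhoE n i = 1 := (rhoUnit i).mul_inv
@[simp] theorem gamE_mul_gamE (j : Fin n) : gamE n j * gamE n j = 1 := (gamUnit j).mul_inv

@[simp] theorem mul_gamE_mul_gamE (x : STVB n) (j : Fin n) : x * gamE n j * gamE n j = x := by
  rw [mul_assoc, gamE_mul_gamE, mul_one]

end SingTVB

namespace SingTVG

open SingTVB CommutationGroup SemidirectProduct

variable {n : ℕ}

@[simp] theorem fa_eq (i : Fin (n - 1)) : fa i = SingTVB.fa i := rfl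
@[simp] theorem fb_eq (i : Fin (n - 1)) : fb i = SingTVB.fb i := rfl

def genToSemidirect : GGen n → CommutationGroup (STVB n) ⋊[conjAut (STVB n)] (STVB n)ˣ
  | .sig i => inr (sigUnit i)
  | .rho i => inr (rhoUnit i)
  | .tau i => inl (of (tauE n i))
  | .taub i => (inl (of (tauE n i)))⁻¹
  | .gam j => inr (gamUnit j)

def toSemidirect (n : ℕ) : STVG n →* CommutationGroup (STVB n) ⋊[conjAut (STVB n)] (STVB n)ˣ :=
  PresentedGroup.toGroup (f := genToSemidirect) <| by
    rintro _ ⟨u, v, h, rfl⟩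
    rw [map_mul, map_inv, mul_inv_eq_one]
    induction h <;>
      simp only [ws, wr, wt, wtb, wg, map_mul, FreeGroup.lift_apply_of, genToSemidirect] <;>
      ext <;> simp
    -- each relation is left as one identity of `STVB n`: among units, or conjugating a `τ`
    case ss h => exact mkS_eq_of_rel (.ss h)
    case rr h => exact mkS_eq_of_rel (.rr h)
    case sr h => exact mkS_eq_of_rel (.sr h)
    case tt h => exact (of_commute (a := tauE n _) (b := tauE n _) (mkS_eq_of_rel (.tt h))).eq
    case st h => exact of_conj_eq_of (u := sigUnit _) (mkS_eq_of_rel (.st h))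
    case tr h => exact (of_conj_eq_of (u := rhoUnit _) (mkS_eq_of_rel (.tr h)).symm).symm
    case tbtb h =>
      exact (of_commute (a := tauE n _) (b := tauE n _) (mkS_eq_of_rel (.tt h))).inv_inv.eq
    case tbt h =>
      exact (of_commute (a := tauE n _) (b := tauE n _) (mkS_eq_of_rel (.tt h))).inv_left.eq
    case stb h => exact of_conj_eq_of (u := sigUnit _) (mkS_eq_of_rel (.st h))
    case tbr h => exact (of_conj_eq_of (u := rhoUnit _) (mkS_eq_of_rel (.tr h)).symm).symm
    case sss h => exact mkS_eq_of_rel (.sss h)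
    case rrr h => exact mkS_eq_of_rel (.rrr h)
    case rsr h => exact mkS_eq_of_rel (.rsr h)
    case rtr h => exact congrArg of (mkS_eq_of_rel (.rtr h))
    case rtbr h => exact congrArg of (mkS_eq_of_rel (.rtr h))
    case sst h => exact of_conj_conj_eq_of (u := sigUnit _) (v := sigUnit _) (mkS_eq_of_rel (.sst h))
    case sst' h =>
      exact of_conj_conj_eq_of (u := sigUnit _) (v := sigUnit _) (mkS_eq_of_rel (.sst' h))
    case sstb h =>
      exact of_conj_conj_eq_of (u := sigUnit _) (v := sigUnit _) (mkS_eq_of_rel (.sst h))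
    case sstb' h =>
      exact of_conj_conj_eq_of (u := sigUnit _) (v := sigUnit _) (mkS_eq_of_rel (.sst' h))
    case stc i => exact of_conj_eq_of (u := sigUnit _) (mkS_eq_of_rel (.stc i))
    case stbc i => exact of_conj_eq_of (u := sigUnit _) (mkS_eq_of_rel (.stc i))
    case grel i => exact mkS_eq_of_rel (.grel i)
    case rsrg i => exact mkS_eq_of_rel (.rsrg i)
    case rtrg i => simpa [mul_assoc] using congrArg of (mkS_eq_of_rel (.rtrg i))
    case rtbrg i => simpa [mul_assoc] using congrArg of (mkS_eq_of_rel (.rtrg i))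
    case ggc i j => exact mkS_eq_of_rel (.gg i j)
    case grc h₁ h₂ => exact mkS_eq_of_rel (.grc h₁ h₂)
    case sgc h₁ h₂ => exact mkS_eq_of_rel (.sgc h₁ h₂)
    case tgc h₁ h₂ => exact (of_conj_eq_of (u := gamUnit _) (mkS_eq_of_rel (.tgc h₁ h₂)).symm).symm
    case tbgc h₁ h₂ => exact (of_conj_eq_of (u := gamUnit _) (mkS_eq_of_rel (.tgc h₁ h₂)).symm).symm

theorem toSemidirect_of (g : GGen n) : toSemidirect n (PresentedGroup.of g) = genToSemidirect g :=
  PresentedGroup.toGroup.of _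

end SingTVG

namespace SingTVB

open SingTVG

variable {n : ℕ}

theorem mk_eq_of_grel {u v : FG n} (h : GRel n u v) :
    (PresentedGroup.mk (grels n) u : STVG n) = PresentedGroup.mk (grels n) v :=
  PresentedGroup.mk_eq_mk_of_mul_inv_mem ⟨u, v, h, rfl⟩

def genToSTVG : Gen n → STVG n
  | .sig i => sigG n i
  | .sigb i => (sigG n i)⁻¹
  | .rho i => rhoG n i
  | .tau i => tauG n i
  | .gam j => gamG n j

def toSTVG (n : ℕ) : STVB n →* STVG n :=
  PresentedMonoid.lift genToSTVG fun u v h => by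
    induction h <;>
      simp only [Ws, Wsb, Wr, Wt, Wg, map_mul, map_one, FreeMonoid.lift_eval_of, genToSTVG]
    case ss h => exact mk_eq_of_grel (.ss h)
    case rr h => exact mk_eq_of_grel (.rr h)
    case sr h => exact mk_eq_of_grel (.sr h)
    case tt h => exact mk_eq_of_grel (.tt h)
    case st h => exact mk_eq_of_grel (.st h)
    case tr h => exact mk_eq_of_grel (.tr h)
    case sss h => exact mk_eq_of_grel (.sss h)
    case rrr h => exact mk_eq_of_grel (.rrr h)
    case rsr h => exact mk_eq_of_grel (.rsr h)
    case rtr h => exact mk_eq_of_grel (.rtr h)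
    case sst h => exact mk_eq_of_grel (.sst h)
    case sst' h => exact mk_eq_of_grel (.sst' h)
    case rho2 i => exact mk_eq_of_grel (.rho2 i)
    case ssb => exact mul_inv_cancel _
    case sbs => exact inv_mul_cancel _
    case stc i => exact mk_eq_of_grel (.stc i)
    case grel i => exact mk_eq_of_grel (.grel i)
    case rsrg i => exact mk_eq_of_grel (.rsrg i)
    case rtrg i => exact mk_eq_of_grel (.rtrg i)
    case g2 j => exact mk_eq_of_grel (.g2 j)
    case gg i j => exact mk_eq_of_grel (.ggc i j)
    case grc h₁ h₂ => exact mk_eq_of_grel (.grc h₁ h₂)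
    case sgc h₁ h₂ => exact mk_eq_of_grel (.sgc h₁ h₂)
    case tgc h₁ h₂ => exact mk_eq_of_grel (.tgc h₁ h₂)

theorem toSTVG_of (g : Gen n) : toSTVG n (PresentedMonoid.of (Rel n) g) = genToSTVG g :=
  PresentedMonoid.lift_of _ _

open CommutationGroup SemidirectProduct in
theorem toSemidirect_comp_toSTVG_injective (n : ℕ) :
    Function.Injective (toSemidirect n ∘ toSTVG n) := by
  refine injective_of_closure_eq_top ((toSemidirect n).comp (toSTVG n))
    (PresentedMonoid.closure_range_of (Rel n)) ?_
  rintro _ ⟨g, rfl⟩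
  rw [MonoidHom.comp_apply, toSTVG_of]
  cases g with
  | sig i => exact .inl ⟨sigUnit i, rfl, toSemidirect_of _⟩
  | sigb i =>
    refine .inl ⟨(sigUnit i)⁻¹, rfl, ?_⟩
    rw [genToSTVG, map_inv, map_inv, sigG, toSemidirect_of]
    rfl
  | rho i => exact .inl ⟨rhoUnit i, rfl, toSemidirect_of _⟩
  | gam j => exact .inl ⟨gamUnit j, rfl, toSemidirect_of _⟩
  | tau i => exact .inr (toSemidirect_of _)

end SingTVB

open SingTVB SingTVG in
theorem stvb_embeds_in_stvg_general (n : ℕ) :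
    ∃ Ψ : STVB n →* STVG n,
      (∀ i : Fin (n - 1), Ψ (sigE n i) = sigG n i) ∧
      (∀ i : Fin (n - 1), Ψ (sigbE n i) = (sigG n i)⁻¹) ∧
      (∀ i : Fin (n - 1), Ψ (rhoE n i) = rhoG n i) ∧
      (∀ i : Fin (n - 1), Ψ (tauE n i) = tauG n i) ∧
      (∀ j : Fin n, Ψ (gamE n j) = gamG n j) ∧
      Function.Injective Ψ :=
  ⟨toSTVG n, fun _ => rfl, fun _ => rfl, fun _ => rfl, fun _ => rfl, fun _ => rfl,
    (toSemidirect_comp_toSTVG_injective n).of_comp⟩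

open SingTVB SingTVG in
/-- the canonical map `STVB n → STVG n`, sending `σᵢ ↦ σᵢ`, `σ̄ᵢ ↦ σᵢ⁻¹`,
`ρᵢ ↦ ρᵢ`, `τᵢ ↦ τᵢ`, `γⱼ ↦ γⱼ`, is a well-defined injective monoid homomorphism:
the singular twisted virtual braid monoid embeds in the singular twisted virtual group. -/
theorem stvb_embeds_in_stvg (n : ℕ) (hn : 2 ≤ n) :
    ∃ Ψ : STVB n →* STVG n,
      (∀ i : Fin (n - 1), Ψ (sigE n i) = sigG n i) ∧
      (∀ i : Fin (n - 1), Ψ (sigbE n i) = (sigG n i)⁻¹) ∧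
      (∀ i : Fin (n - 1), Ψ (rhoE n i) = rhoG n i) ∧
      (∀ i : Fin (n - 1), Ψ (tauE n i) = tauG n i) ∧
      (∀ j : Fin n, Ψ (gamE n j) = gamG n j) ∧
      Function.Injective Ψ :=
  stvb_embeds_in_stvg_general n
end

section
/- Let n ≥ 2, let k be a commutative ring, G a group, φ : TVB_n → G a group homomorphism, and a, b, c ∈ k. Then there exists a monoid homomorphism Φ : STVB_n → k[G] into the multiplicative monoid of the monoid algebra k[G] such that Φ(σ_i) = φ(σ_i), Φ(σ̄_i) = φ(σ_i)⁻¹, Φ(ρ_i) = φ(ρ_i), Φ(τ_i) = a·φ(σ_i) + b·φ(σ_i)⁻¹ + c·1 for 1 ≤ i ≤ n−1, and Φ(γ_j) = φ(γ_j) for 1 ≤ j ≤ n (group elements being regarded as elements of k[G] via the canonical embedding). -/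
namespace TwVB

/-- Generators of the twisted virtual braid group `TVB n` (0-based indexing). -/
inductive TGen (n : ℕ) : Type
  | sig : Fin (n - 1) → TGen n
  | rho : Fin (n - 1) → TGen n
  | gam : Fin n → TGen n

abbrev FT (n : ℕ) := FreeGroup (TGen n)

def fa {n : ℕ} (i : Fin (n - 1)) : Fin n := ⟨i.val, by have := i.isLt; omega⟩
def fb {n : ℕ} (i : Fin (n - 1)) : Fin n := ⟨i.val + 1, by have := i.isLt; omega⟩

def ws {n : ℕ} (i : Fin (n - 1)) : FT n := FreeGroup.of (TGen.sig i)
def wr {n : ℕ} (i : Fin (n - 1)) : FT n := FreeGroup.of (TGen.rho i)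
def wg {n : ℕ} (j : Fin n) : FT n := FreeGroup.of (TGen.gam j)

/-- `|i - j| > 1`. -/
def Far {m : ℕ} (i j : Fin m) : Prop := i.val + 1 < j.val ∨ j.val + 1 < i.val

/-- Defining relations of the twisted virtual braid group, as pairs of equal words. -/
inductive TRel (n : ℕ) : FT n → FT n → Prop
  | ss {i j : Fin (n - 1)} (h : Far i j) : TRel n (ws i * ws j) (ws j * ws i)
  | rr {i j : Fin (n - 1)} (h : Far i j) : TRel n (wr i * wr j) (wr j * wr i)
  | sr {i j : Fin (n - 1)} (h : Far i j) : TRel n (ws i * wr j) (wr j * ws i)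
  | sss {i j : Fin (n - 1)} (h : j.val = i.val + 1) :
      TRel n (ws i * ws j * ws i) (ws j * ws i * ws j)
  | rrr {i j : Fin (n - 1)} (h : j.val = i.val + 1) :
      TRel n (wr i * wr j * wr i) (wr j * wr i * wr j)
  | rsr {i j : Fin (n - 1)} (h : j.val = i.val + 1) :
      TRel n (wr i * ws j * wr i) (wr j * ws i * wr j)
  | rho2 (i : Fin (n - 1)) : TRel n (wr i * wr i) 1
  | grel (i : Fin (n - 1)) : TRel n (wg (fb i) * wr i) (wr i * wg (fa i))
  | rsrg (i : Fin (n - 1)) :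
      TRel n (wr i * ws i * wr i) (wg (fb i) * wg (fa i) * ws i * wg (fa i) * wg (fb i))
  | g2 (j : Fin n) : TRel n (wg j * wg j) 1
  | ggc (i j : Fin n) : TRel n (wg i * wg j) (wg j * wg i)
  | grc {i : Fin (n - 1)} {j : Fin n} (h1 : j ≠ fa i) (h2 : j ≠ fb i) :
      TRel n (wg j * wr i) (wr i * wg j)
  | sgc {i : Fin (n - 1)} {j : Fin n} (h1 : j ≠ fa i) (h2 : j ≠ fb i) :
      TRel n (ws i * wg j) (wg j * ws i)

/-- The set of relators `u * v⁻¹` for the relations `u = v` of `TVB n`. -/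
def trels (n : ℕ) : Set (FT n) := {x | ∃ u v : FT n, TRel n u v ∧ x = u * v⁻¹}

/-- The twisted virtual braid group on `n` strands. -/
abbrev TVB (n : ℕ) := PresentedGroup (trels n)

def sigT (n : ℕ) (i : Fin (n - 1)) : TVB n := PresentedGroup.of (TGen.sig i)
def rhoT (n : ℕ) (i : Fin (n - 1)) : TVB n := PresentedGroup.of (TGen.rho i)
def gamT (n : ℕ) (j : Fin n) : TVB n := PresentedGroup.of (TGen.gam j)

/-- The element `T_i = a·φ(σ_i) + b·φ(σ_i)⁻¹ + c·1` of the monoid algebra `k[G]`. -/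
noncomputable def Telt (n : ℕ) (k : Type*) [CommRing k] (G : Type*) [Group G] (φ : TVB n →* G)
    (a b c : k) (i : Fin (n - 1)) : MonoidAlgebra k G :=
  a • MonoidAlgebra.of k G (φ (sigT n i)) +
    b • MonoidAlgebra.of k G ((φ (sigT n i))⁻¹) + c • (1 : MonoidAlgebra k G)

end TwVB

namespace MonoidAlgebra

lemma mapDomainAlgHom_of (k : Type*) [CommSemiring k] {G H : Type*} [Monoid G] [Monoid H]
    (f : G →* H) (x : G) : mapDomainAlgHom k k f (of k G x) = of k H (f x) := by
  simp [mapDomain_single]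

variable {k : Type*} [CommSemiring k] {G : Type*} [Group G]

noncomputable def tauElt (a b c : k) (x : G) : MonoidAlgebra k G :=
  a • of k G x + b • of k G x⁻¹ + c • 1

variable (a b c : k)

lemma of_mul_tauElt_mul_of (u x v : G) :
    of k G u * tauElt a b c x * of k G v =
      a • of k G (u * x * v) + b • of k G (u * x⁻¹ * v) + c • of k G (u * v) := by
  simp only [tauElt, mul_add, add_mul, mul_smul_comm, smul_mul_assoc, mul_one, map_mul]

lemma of_mul_tauElt_mul_of_eq {u v : G} (h : u * v = 1) (x : G) :
    of k G u * tauElt a b c x * of k G v = tauElt a b c (u * x * v) := by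
  obtain rfl : v = u⁻¹ := eq_inv_of_mul_eq_one_right h
  rw [of_mul_tauElt_mul_of, tauElt, h, map_one]
  simp only [mul_inv_rev, inv_inv, mul_assoc]

lemma of_mul_tauElt_eq {u x y : G} (h : u * x = y * u) :
    of k G u * tauElt a b c x = tauElt a b c y * of k G u := by
  have hy : u * x * u⁻¹ = y := by rw [h, mul_inv_cancel_right]
  calc of k G u * tauElt a b c x
      = of k G u * tauElt a b c x * of k G u⁻¹ * of k G u := by
        rw [mul_assoc _ (of k G u⁻¹), ← map_mul, inv_mul_cancel, map_one, mul_one]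
    _ = tauElt a b c y * of k G u := by rw [of_mul_tauElt_mul_of_eq a b c (mul_inv_cancel u), hy]

lemma commute_of_tauElt {u x : G} (h : Commute u x) :
    Commute (of k G u) (tauElt a b c x) :=
  of_mul_tauElt_eq a b c h.eq

lemma commute_tauElt {x y : G} (h : Commute x y) :
    Commute (tauElt a b c x) (tauElt a b c y) :=
  (((commute_of_tauElt a b c h).smul_left a).add_left
    ((commute_of_tauElt a b c h.inv_left).smul_left b)).add_left
    ((Commute.one_left _).smul_left c)

lemma mapDomainAlgHom_tauElt {H : Type*} [Group H] (f : G →* H) (x : G) :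
    mapDomainAlgHom k k f (tauElt a b c x) =
      a • of k H (f x) + b • of k H (f x)⁻¹ + c • 1 := by
  simp only [tauElt, map_add, map_smul, map_one, mapDomainAlgHom_of, map_inv]

end MonoidAlgebra

namespace TwVB

variable {n : ℕ} {i j : Fin (n - 1)}

lemma mk_eq_mk_of_trel {u v : FT n} (h : TRel n u v) :
    PresentedGroup.mk (trels n) u = PresentedGroup.mk (trels n) v :=
  PresentedGroup.mk_eq_mk_of_mul_inv_mem ⟨u, v, h, rfl⟩

@[simp] lemma mk_ws : PresentedGroup.mk (trels n) (ws i) = sigT n i := rfl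
@[simp] lemma mk_wr : PresentedGroup.mk (trels n) (wr i) = rhoT n i := rfl
@[simp] lemma mk_wg (j : Fin n) : PresentedGroup.mk (trels n) (wg j) = gamT n j := rfl

lemma sigT_commute (h : Far i j) : Commute (sigT n i) (sigT n j) :=
  show _ * _ = _ * _ by simpa using mk_eq_mk_of_trel (.ss h)

lemma rhoT_commute (h : Far i j) : Commute (rhoT n i) (rhoT n j) :=
  show _ * _ = _ * _ by simpa using mk_eq_mk_of_trel (.rr h)

lemma sigT_rhoT_commute (h : Far i j) : Commute (sigT n i) (rhoT n j) :=
  show _ * _ = _ * _ by simpa using mk_eq_mk_of_trel (.sr h)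

lemma sigT_braid (h : j.val = i.val + 1) :
    sigT n i * sigT n j * sigT n i = sigT n j * sigT n i * sigT n j := by
  simpa using mk_eq_mk_of_trel (.sss h)

lemma rhoT_braid (h : j.val = i.val + 1) :
    rhoT n i * rhoT n j * rhoT n i = rhoT n j * rhoT n i * rhoT n j := by
  simpa using mk_eq_mk_of_trel (.rrr h)

lemma rhoT_sigT_braid (h : j.val = i.val + 1) :
    rhoT n i * sigT n j * rhoT n i = rhoT n j * sigT n i * rhoT n j := by
  simpa using mk_eq_mk_of_trel (.rsr h)

lemma rhoT_mul_self (i : Fin (n - 1)) : rhoT n i * rhoT n i = 1 := by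
  simpa using mk_eq_mk_of_trel (.rho2 i)

lemma gamT_fb_mul_rhoT (i : Fin (n - 1)) :
    gamT n (fb i) * rhoT n i = rhoT n i * gamT n (fa i) := by
  simpa using mk_eq_mk_of_trel (.grel i)

lemma rhoT_mul_sigT_mul_rhoT (i : Fin (n - 1)) :
    rhoT n i * sigT n i * rhoT n i =
      gamT n (fb i) * gamT n (fa i) * sigT n i * gamT n (fa i) * gamT n (fb i) := by
  simpa using mk_eq_mk_of_trel (.rsrg i)

lemma gamT_mul_self (j : Fin n) : gamT n j * gamT n j = 1 := by
  simpa using mk_eq_mk_of_trel (.g2 j)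

lemma gamT_commute (i j : Fin n) : Commute (gamT n i) (gamT n j) :=
  show _ * _ = _ * _ by simpa using mk_eq_mk_of_trel (.ggc i j)

lemma gamT_rhoT_commute {j : Fin n} (h1 : j ≠ fa i) (h2 : j ≠ fb i) :
    Commute (gamT n j) (rhoT n i) :=
  show _ * _ = _ * _ by simpa using mk_eq_mk_of_trel (.grc h1 h2)

lemma sigT_gamT_commute {j : Fin n} (h1 : j ≠ fa i) (h2 : j ≠ fb i) :
    Commute (sigT n i) (gamT n j) :=
  show _ * _ = _ * _ by simpa using mk_eq_mk_of_trel (.sgc h1 h2)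

end TwVB

namespace SingTVB

open MonoidAlgebra TwVB

variable {n : ℕ} (k : Type*) [CommSemiring k] (a b c : k)

noncomputable def genImage : Gen n → MonoidAlgebra k (TVB n)
  | .sig i => of k _ (sigT n i)
  | .sigb i => of k _ (sigT n i)⁻¹
  | .rho i => of k _ (rhoT n i)
  | .tau i => tauElt a b c (sigT n i)
  | .gam j => of k _ (gamT n j)

@[simp] lemma fa_eq (i : Fin (n - 1)) : SingTVB.fa i = TwVB.fa i := rfl
@[simp] lemma fb_eq (i : Fin (n - 1)) : SingTVB.fb i = TwVB.fb i := rfl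

section
variable {k a b c}

@[simp] lemma lift_genImage_Ws (i : Fin (n - 1)) :
    FreeMonoid.lift (genImage k a b c) (Ws i) = of k _ (sigT n i) := rfl
@[simp] lemma lift_genImage_Wsb (i : Fin (n - 1)) :
    FreeMonoid.lift (genImage k a b c) (Wsb i) = of k _ (sigT n i)⁻¹ := rfl
@[simp] lemma lift_genImage_Wr (i : Fin (n - 1)) :
    FreeMonoid.lift (genImage k a b c) (Wr i) = of k _ (rhoT n i) := rfl
@[simp] lemma lift_genImage_Wt (i : Fin (n - 1)) :
    FreeMonoid.lift (genImage k a b c) (Wt i) = tauElt a b c (sigT n i) := rfl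
@[simp] lemma lift_genImage_Wg (j : Fin n) :
    FreeMonoid.lift (genImage k a b c) (Wg j) = of k _ (gamT n j) := rfl

end

lemma lift_genImage_eq_of_rel {u v : FM n} (h : Rel n u v) :
    FreeMonoid.lift (genImage k a b c) u = FreeMonoid.lift (genImage k a b c) v := by
  cases h with
  | ss h => simpa using congrArg (of k _) (sigT_commute h).eq
  | rr h => simpa using congrArg (of k _) (rhoT_commute h).eq
  | sr h => simpa using congrArg (of k _) (sigT_rhoT_commute h).eq
  | tt h => simpa using (commute_tauElt a b c (sigT_commute h)).eq
  | st h => simpa using (commute_of_tauElt a b c (sigT_commute h)).eq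
  | tr h => simpa using (commute_of_tauElt a b c (sigT_rhoT_commute h).symm).symm.eq
  | sss h => simpa using congrArg (of k _) (sigT_braid h)
  | rrr h => simpa using congrArg (of k _) (rhoT_braid h)
  | rsr h => simpa using congrArg (of k _) (rhoT_sigT_braid h)
  | @rtr i j h =>
    simp only [map_mul, lift_genImage_Wr, lift_genImage_Wt]
    rw [of_mul_tauElt_mul_of_eq a b c (rhoT_mul_self i),
      of_mul_tauElt_mul_of_eq a b c (rhoT_mul_self j), rhoT_sigT_braid h]
  | sst h =>
    simp only [map_mul, lift_genImage_Ws, lift_genImage_Wt]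
    rw [← map_mul, of_mul_tauElt_eq a b c ((sigT_braid h).trans (mul_assoc _ _ _)), mul_assoc,
      ← map_mul]
  | sst' h =>
    simp only [map_mul, lift_genImage_Ws, lift_genImage_Wt]
    rw [← map_mul, of_mul_tauElt_eq a b c ((sigT_braid h).symm.trans (mul_assoc _ _ _)), mul_assoc,
      ← map_mul]
  | rho2 i => simpa [one_def] using congrArg (of k _) (rhoT_mul_self i)
  | ssb i => simp [one_def]
  | sbs i => simp [one_def]
  | stc i => simpa using (commute_of_tauElt a b c (Commute.refl (sigT n i))).eq
  | grel i => simpa using congrArg (of k _) (gamT_fb_mul_rhoT i)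
  | rsrg i => simpa using congrArg (of k _) (rhoT_mul_sigT_mul_rhoT i)
  | rtrg i =>
    have hγ : gamT n (TwVB.fb i) * gamT n (TwVB.fa i) * (gamT n (TwVB.fa i) * gamT n (TwVB.fb i))
        = 1 := by
      rw [mul_assoc, ← mul_assoc (gamT n (TwVB.fa i)), gamT_mul_self, one_mul, gamT_mul_self]
    simp only [map_mul, lift_genImage_Wr, lift_genImage_Wt, lift_genImage_Wg, fa_eq, fb_eq]
    rw [of_mul_tauElt_mul_of_eq a b c (rhoT_mul_self i), ← map_mul (of k _) (gamT n _),
      mul_assoc _ (of k _ _), ← map_mul, of_mul_tauElt_mul_of_eq a b c hγ, rhoT_mul_sigT_mul_rhoT]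
    simp only [mul_assoc]
  | g2 j => simpa [one_def] using congrArg (of k _) (gamT_mul_self j)
  | gg i j => simpa using congrArg (of k _) (gamT_commute i j).eq
  | grc h1 h2 => simpa using congrArg (of k _) (gamT_rhoT_commute h1 h2).eq
  | sgc h1 h2 => simpa using congrArg (of k _) (sigT_gamT_commute h1 h2).eq
  | tgc h1 h2 => simpa using (commute_of_tauElt a b c (sigT_gamT_commute h1 h2).symm).symm.eq

noncomputable def universalRep : STVB n →* MonoidAlgebra k (TVB n) :=
  PresentedMonoid.lift (genImage k a b c) fun _ _ => lift_genImage_eq_of_rel k a b c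

end SingTVB

open SingTVB TwVB in
theorem stvb_representation_extension_general (n : ℕ)
    (k : Type*) [CommRing k] (G : Type*) [Group G] (φ : TVB n →* G) (a b c : k) :
    ∃ Φ : STVB n →* MonoidAlgebra k G,
      (∀ i : Fin (n - 1), Φ (sigE n i) = MonoidAlgebra.of k G (φ (sigT n i))) ∧
      (∀ i : Fin (n - 1), Φ (sigbE n i) = MonoidAlgebra.of k G ((φ (sigT n i))⁻¹)) ∧
      (∀ i : Fin (n - 1), Φ (rhoE n i) = MonoidAlgebra.of k G (φ (rhoT n i))) ∧
      (∀ i : Fin (n - 1), Φ (tauE n i) =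
        a • MonoidAlgebra.of k G (φ (sigT n i)) +
          b • MonoidAlgebra.of k G ((φ (sigT n i))⁻¹) + c • (1 : MonoidAlgebra k G)) ∧
      (∀ j : Fin n, Φ (gamE n j) = MonoidAlgebra.of k G (φ (gamT n j))) :=
  ⟨(MonoidAlgebra.mapDomainAlgHom k k φ : MonoidAlgebra k (TVB n) →* MonoidAlgebra k G).comp
      (universalRep k a b c),
    fun i => MonoidAlgebra.mapDomainAlgHom_of k φ (sigT n i),
    fun i => (MonoidAlgebra.mapDomainAlgHom_of k φ (sigT n i)⁻¹).trans (by rw [map_inv]),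
    fun i => MonoidAlgebra.mapDomainAlgHom_of k φ (rhoT n i),
    fun i => MonoidAlgebra.mapDomainAlgHom_tauElt a b c φ (sigT n i),
    fun j => MonoidAlgebra.mapDomainAlgHom_of k φ (gamT n j)⟩

open SingTVB TwVB in
/-- any representation `φ : TVB n → G` extends to a representation
`Φ : STVB n → k[G]` of the singular twisted virtual braid monoid, with
`Φ(σᵢ) = φ(σᵢ)`, `Φ(σ̄ᵢ) = φ(σᵢ)⁻¹`, `Φ(ρᵢ) = φ(ρᵢ)`, `Φ(τᵢ) = a·φ(σᵢ) + b·φ(σᵢ)⁻¹ + c·1`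
and `Φ(γⱼ) = φ(γⱼ)`. -/
theorem stvb_representation_extension (n : ℕ) (hn : 2 ≤ n)
    (k : Type*) [CommRing k] (G : Type*) [Group G] (φ : TVB n →* G) (a b c : k) :
    ∃ Φ : STVB n →* MonoidAlgebra k G,
      (∀ i : Fin (n - 1), Φ (sigE n i) = MonoidAlgebra.of k G (φ (sigT n i))) ∧
      (∀ i : Fin (n - 1), Φ (sigbE n i) = MonoidAlgebra.of k G ((φ (sigT n i))⁻¹)) ∧
      (∀ i : Fin (n - 1), Φ (rhoE n i) = MonoidAlgebra.of k G (φ (rhoT n i))) ∧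
      (∀ i : Fin (n - 1), Φ (tauE n i) =
        a • MonoidAlgebra.of k G (φ (sigT n i)) +
          b • MonoidAlgebra.of k G ((φ (sigT n i))⁻¹) + c • (1 : MonoidAlgebra k G)) ∧
      (∀ j : Fin n, Φ (gamE n j) = MonoidAlgebra.of k G (φ (gamT n j))) :=
  stvb_representation_extension_general n k G φ a b c
end

section
/- For every n ≥ 2 and all 1 ≤ i ≠ j ≤ n, the relation y_{i,j} = γ_i·γ_j·y_{j,i}·γ_j·γ_i holds in STVB_n; in particular, for 1 ≤ i ≤ n−1 one has y_{i,i+1} = γ_i·γ_{i+1}·y_{i+1,i}·γ_i·γ_{i+1}, and moreover y_{i,i+1}·γ_k = γ_k·y_{i,i+1} for every k with k ≠ i and k ≠ i+1. -/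
namespace SingTVB

/-- ρ-generator word with a natural-number (0-based) index; junk value `1` out of range. -/
def WrN (n : ℕ) (k : ℕ) : FM n := if h : k < n - 1 then Wr ⟨k, h⟩ else 1
def WsN (n : ℕ) (k : ℕ) : FM n := if h : k < n - 1 then Ws ⟨k, h⟩ else 1
def WsbN (n : ℕ) (k : ℕ) : FM n := if h : k < n - 1 then Wsb ⟨k, h⟩ else 1
def WtN (n : ℕ) (k : ℕ) : FM n := if h : k < n - 1 then Wt ⟨k, h⟩ else 1

/-- The ascending word `ρ_{i+1} ρ_{i+2} ⋯ ρ_{j-1}` (0-based strand indices `i < j`). -/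
def asc (n i j : ℕ) : FM n := ((List.range' (i + 1) (j - 1 - i)).map (WrN n)).prod
/-- The descending word `ρ_{j-1} ρ_{j-2} ⋯ ρ_{i+1}` (0-based strand indices `i < j`). -/
def desc (n i j : ℕ) : FM n := ((List.range' (i + 1) (j - 1 - i)).reverse.map (WrN n)).prod

/-- The word for the generator `λ_{i,j}` (0-based strands `i ≠ j`), built from
`λ_{i,i+1} = ρ_i σ̄_i` and `λ_{i+1,i} = ρ_i λ_{i,i+1} ρ_i` by conjugation. -/
def lamW (n i j : ℕ) : FM n :=
  if i < j then desc n i j * (WrN n i * WsbN n i) * asc n i j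
  else desc n j i * (WrN n j * (WrN n j * WsbN n j) * WrN n j) * asc n j i

/-- The word for `λ̄_{i,j}`, built from `λ̄_{i,i+1} = σ_i ρ_i`. -/
def lamBarW (n i j : ℕ) : FM n :=
  if i < j then desc n i j * (WsN n i * WrN n i) * asc n i j
  else desc n j i * (WrN n j * (WsN n j * WrN n j) * WrN n j) * asc n j i

/-- The word for `y_{i,j}`, built from `y_{i,i+1} = τ_i ρ_i`. -/
def yW (n i j : ℕ) : FM n :=
  if i < j then desc n i j * (WtN n i * WrN n i) * asc n i j
  else desc n j i * (WrN n j * (WtN n j * WrN n j) * WrN n j) * asc n j i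

/-- The word for `x_{i,j}`, built from `x_{i,i+1} = σ_i` and `x_{i+1,i} = ρ_i σ_i ρ_i`. -/
def xW (n i j : ℕ) : FM n :=
  if i < j then desc n i j * WsN n i * asc n i j
  else desc n j i * (WrN n j * WsN n j * WrN n j) * asc n j i

/-- The word for `x̄_{i,j}`, with `σ̄` in place of `σ`. -/
def xBarW (n i j : ℕ) : FM n :=
  if i < j then desc n i j * WsbN n i * asc n i j
  else desc n j i * (WrN n j * WsbN n j * WrN n j) * asc n j i

/-- The word for `z_{i,j}`, built from `z_{i,i+1} = τ_i` and `z_{i+1,i} = ρ_i τ_i ρ_i`. -/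
def zW (n i j : ℕ) : FM n :=
  if i < j then desc n i j * WtN n i * asc n i j
  else desc n j i * (WrN n j * WtN n j * WrN n j) * asc n j i

def lam (n : ℕ) (i j : Fin n) : STVB n := mkS n (lamW n i j)
def lamBar (n : ℕ) (i j : Fin n) : STVB n := mkS n (lamBarW n i j)
def yel (n : ℕ) (i j : Fin n) : STVB n := mkS n (yW n i j)
def xel (n : ℕ) (i j : Fin n) : STVB n := mkS n (xW n i j)
def xBar (n : ℕ) (i j : Fin n) : STVB n := mkS n (xBarW n i j)
def zel (n : ℕ) (i j : Fin n) : STVB n := mkS n (zW n i j)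

end SingTVB
namespace SingTVB

variable {n : ℕ}

theorem mk_rel {a b : FM n} (h : Rel n a b) : mkS n a = mkS n b :=
  Quotient.sound (ConGen.Rel.of a b h)

def WgN (n k : ℕ) : FM n := if h : k < n then Wg ⟨k, h⟩ else 1

def rN (n k : ℕ) : STVB n := mkS n (WrN n k)
def tN (n k : ℕ) : STVB n := mkS n (WtN n k)
def gN (n k : ℕ) : STVB n := mkS n (WgN n k)
def DN (n i j : ℕ) : STVB n := mkS n (desc n i j)
def AN (n i j : ℕ) : STVB n := mkS n (asc n i j)

private theorem cancel_left {M : Type*} [Monoid M] {x : M} (h : x * x = 1) (y : M) :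
    x * (x * y) = y := by rw [← mul_assoc, h, one_mul]

theorem r2E {k : ℕ} (h : k < n - 1) : rN n k * rN n k = 1 := by
  rw [show rN n k = mkS n (Wr ⟨k, h⟩) from by rw [rN, WrN, dif_pos h],
    ← map_mul, mk_rel (Rel.rho2 ⟨k, h⟩), map_one]

theorem g2E {m : ℕ} (h : m < n) : gN n m * gN n m = 1 := by
  rw [show gN n m = mkS n (Wg ⟨m, h⟩) from by rw [gN, WgN, dif_pos h],
    ← map_mul, mk_rel (Rel.g2 ⟨m, h⟩), map_one]

theorem ggE (a b : ℕ) : gN n a * gN n b = gN n b * gN n a := by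
  by_cases ha : a < n
  · by_cases hb : b < n
    · rw [show gN n a = mkS n (Wg ⟨a, ha⟩) from by rw [gN, WgN, dif_pos ha],
        show gN n b = mkS n (Wg ⟨b, hb⟩) from by rw [gN, WgN, dif_pos hb],
        ← map_mul, ← map_mul]
      exact mk_rel (Rel.gg _ _)
    · rw [show gN n b = 1 from by rw [gN, WgN, dif_neg hb, map_one], mul_one, one_mul]
  · rw [show gN n a = 1 from by rw [gN, WgN, dif_neg ha, map_one], mul_one, one_mul]

theorem grelE {k : ℕ} (h : k < n - 1) : gN n (k + 1) * rN n k = rN n k * gN n k := by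
  have hk1 : k + 1 < n := by omega
  have hk : k < n := by omega
  rw [show gN n (k + 1) = mkS n (Wg (fb ⟨k, h⟩)) from by rw [gN, WgN, dif_pos hk1]; rfl,
    show gN n k = mkS n (Wg (fa ⟨k, h⟩)) from by rw [gN, WgN, dif_pos hk]; rfl,
    show rN n k = mkS n (Wr ⟨k, h⟩) from by rw [rN, WrN, dif_pos h],
    ← map_mul, ← map_mul]
  exact mk_rel (Rel.grel _)

theorem grelE' {k : ℕ} (h : k < n - 1) : rN n k * gN n (k + 1) = gN n k * rN n k := by
  have h2 := r2E h
  have h1 := grelE h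
  calc rN n k * gN n (k + 1)
      = rN n k * gN n (k + 1) * (rN n k * rN n k) := by rw [h2, mul_one]
    _ = rN n k * ((gN n (k + 1) * rN n k) * rN n k) := by simp only [mul_assoc]
    _ = rN n k * ((rN n k * gN n k) * rN n k) := by rw [h1]
    _ = (rN n k * rN n k) * (gN n k * rN n k) := by simp only [mul_assoc]
    _ = gN n k * rN n k := by rw [h2, one_mul]

theorem grcE {k m : ℕ} (h : k < n - 1) (h1 : m ≠ k) (h2 : m ≠ k + 1) :
    gN n m * rN n k = rN n k * gN n m := by
  by_cases hm : m < n
  · rw [show gN n m = mkS n (Wg ⟨m, hm⟩) from by rw [gN, WgN, dif_pos hm],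
      show rN n k = mkS n (Wr ⟨k, h⟩) from by rw [rN, WrN, dif_pos h],
      ← map_mul, ← map_mul]
    exact mk_rel (Rel.grc (fun he => h1 (congrArg Fin.val he))
      (fun he => h2 (congrArg Fin.val he)))
  · rw [show gN n m = 1 from by rw [gN, WgN, dif_neg hm, map_one], mul_one, one_mul]

theorem tgcE {k m : ℕ} (h : k < n - 1) (h1 : m ≠ k) (h2 : m ≠ k + 1) :
    tN n k * gN n m = gN n m * tN n k := by
  by_cases hm : m < n
  · rw [show gN n m = mkS n (Wg ⟨m, hm⟩) from by rw [gN, WgN, dif_pos hm],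
      show tN n k = mkS n (Wt ⟨k, h⟩) from by rw [tN, WtN, dif_pos h],
      ← map_mul, ← map_mul]
    exact mk_rel (Rel.tgc (fun he => h1 (congrArg Fin.val he))
      (fun he => h2 (congrArg Fin.val he)))
  · rw [show gN n m = 1 from by rw [gN, WgN, dif_neg hm, map_one], mul_one, one_mul]

theorem rtrgE {k : ℕ} (h : k < n - 1) :
    rN n k * tN n k * rN n k =
      gN n (k + 1) * gN n k * tN n k * gN n k * gN n (k + 1) := by
  have hk1 : k + 1 < n := by omega
  have hk : k < n := by omega
  rw [show gN n (k + 1) = mkS n (Wg (fb ⟨k, h⟩)) from by rw [gN, WgN, dif_pos hk1]; rfl,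
    show gN n k = mkS n (Wg (fa ⟨k, h⟩)) from by rw [gN, WgN, dif_pos hk]; rfl,
    show rN n k = mkS n (Wr ⟨k, h⟩) from by rw [rN, WrN, dif_pos h],
    show tN n k = mkS n (Wt ⟨k, h⟩) from by rw [tN, WtN, dif_pos h]]
  simp only [← map_mul]
  exact mk_rel (Rel.rtrg _)

theorem desc_base (i : ℕ) : desc n i (i + 1) = 1 := by
  unfold desc
  have h : i + 1 - 1 - i = 0 := by omega
  rw [h]
  rfl

theorem asc_base (i : ℕ) : asc n i (i + 1) = 1 := by
  unfold asc
  have h : i + 1 - 1 - i = 0 := by omega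
  rw [h]
  rfl

theorem desc_succ {i j : ℕ} (h : i + 1 < j) :
    desc n i j = WrN n (j - 1) * desc n i (j - 1) := by
  unfold desc
  have h1 : j - 1 - i = (j - 1 - 1 - i) + 1 := by omega
  have h2 : i + 1 + (j - 1 - 1 - i) = j - 1 := by omega
  rw [h1, List.range'_1_concat, h2, List.reverse_append, List.map_append, List.prod_append]
  simp

theorem asc_succ {i j : ℕ} (h : i + 1 < j) :
    asc n i j = asc n i (j - 1) * WrN n (j - 1) := by
  unfold asc
  have h1 : j - 1 - i = (j - 1 - 1 - i) + 1 := by omega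
  have h2 : i + 1 + (j - 1 - 1 - i) = j - 1 := by omega
  rw [h1, List.range'_1_concat, h2, List.map_append, List.prod_append]
  simp

theorem DN_succ {i j : ℕ} (h : i + 1 ≤ j) : DN n i (j + 1) = rN n j * DN n i j := by
  unfold DN rN
  rw [desc_succ (show i + 1 < j + 1 by omega), map_mul, Nat.add_sub_cancel]

theorem AN_succ {i j : ℕ} (h : i + 1 ≤ j) : AN n i (j + 1) = AN n i j * rN n j := by
  unfold AN rN
  rw [asc_succ (show i + 1 < j + 1 by omega), map_mul, Nat.add_sub_cancel]

theorem DN_base (i : ℕ) : DN n i (i + 1) = 1 := by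
  unfold DN; rw [desc_base, map_one]

theorem AN_base (i : ℕ) : AN n i (i + 1) = 1 := by
  unfold AN; rw [asc_base, map_one]

theorem gD {i j : ℕ} (hij : i + 1 ≤ j) :
    j < n → gN n j * DN n i j = DN n i j * gN n (i + 1) := by
  induction j, hij using Nat.le_induction with
  | base => intro _; rw [DN_base, mul_one, one_mul]
  | succ j hj' ih =>
    intro hj
    rw [DN_succ hj']
    calc gN n (j + 1) * (rN n j * DN n i j)
        = (gN n (j + 1) * rN n j) * DN n i j := (mul_assoc _ _ _).symm
      _ = (rN n j * gN n j) * DN n i j := by rw [grelE (show j < n - 1 by omega)]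
      _ = rN n j * (gN n j * DN n i j) := mul_assoc _ _ _
      _ = rN n j * (DN n i j * gN n (i + 1)) := by rw [ih (by omega)]
      _ = (rN n j * DN n i j) * gN n (i + 1) := (mul_assoc _ _ _).symm

theorem gDc {m i j : ℕ} (hm : m ≤ i) (hij : i + 1 ≤ j) :
    j < n → gN n m * DN n i j = DN n i j * gN n m := by
  induction j, hij using Nat.le_induction with
  | base => intro _; rw [DN_base, mul_one, one_mul]
  | succ j hj' ih =>
    intro hj
    rw [DN_succ hj']
    calc gN n m * (rN n j * DN n i j)
        = (gN n m * rN n j) * DN n i j := (mul_assoc _ _ _).symm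
      _ = (rN n j * gN n m) * DN n i j := by
          rw [grcE (show j < n - 1 by omega) (by omega) (by omega)]
      _ = rN n j * (gN n m * DN n i j) := mul_assoc _ _ _
      _ = rN n j * (DN n i j * gN n m) := by rw [ih (by omega)]
      _ = (rN n j * DN n i j) * gN n m := (mul_assoc _ _ _).symm

theorem gA {i j : ℕ} (hij : i + 1 ≤ j) :
    j < n → AN n i j * gN n j = gN n (i + 1) * AN n i j := by
  induction j, hij using Nat.le_induction with
  | base => intro _; rw [AN_base, mul_one, one_mul]
  | succ j hj' ih =>
    intro hj
    rw [AN_succ hj']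
    calc (AN n i j * rN n j) * gN n (j + 1)
        = AN n i j * (rN n j * gN n (j + 1)) := mul_assoc _ _ _
      _ = AN n i j * (gN n j * rN n j) := by rw [grelE' (show j < n - 1 by omega)]
      _ = (AN n i j * gN n j) * rN n j := (mul_assoc _ _ _).symm
      _ = (gN n (i + 1) * AN n i j) * rN n j := by rw [ih (by omega)]
      _ = gN n (i + 1) * (AN n i j * rN n j) := mul_assoc _ _ _

theorem gAc {m i j : ℕ} (hm : m ≤ i) (hij : i + 1 ≤ j) :
    j < n → AN n i j * gN n m = gN n m * AN n i j := by
  induction j, hij using Nat.le_induction with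
  | base => intro _; rw [AN_base, mul_one, one_mul]
  | succ j hj' ih =>
    intro hj
    rw [AN_succ hj']
    calc (AN n i j * rN n j) * gN n m
        = AN n i j * (rN n j * gN n m) := mul_assoc _ _ _
      _ = AN n i j * (gN n m * rN n j) := by
          rw [← grcE (show j < n - 1 by omega) (by omega) (by omega)]
      _ = (AN n i j * gN n m) * rN n j := (mul_assoc _ _ _).symm
      _ = (gN n m * AN n i j) * rN n j := by rw [ih (by omega)]
      _ = gN n m * (AN n i j * rN n j) := mul_assoc _ _ _

theorem gamE_eq (k : Fin n) : gamE n k = gN n k.val := by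
  rw [gamE, gN, WgN, dif_pos k.isLt]

theorem yel_lt {i j : Fin n} (h : (i : ℕ) < (j : ℕ)) :
    yel n i j = DN n i j * (tN n i * rN n i) * AN n i j := by
  unfold yel yW
  rw [if_pos h, map_mul, map_mul, map_mul]
  rfl

theorem yel_gt {i j : Fin n} (h : (j : ℕ) < (i : ℕ)) :
    yel n i j = DN n j i * (rN n j * (tN n j * rN n j) * rN n j) * AN n j i := by
  unfold yel yW
  rw [if_neg (by omega), map_mul, map_mul, map_mul, map_mul, map_mul]
  rfl

theorem central {c : ℕ} (hc : c < n - 1) :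
    gN n c * gN n (c + 1) * (rN n c * (tN n c * rN n c) * rN n c) * gN n (c + 1) * gN n c
      = tN n c * rN n c := by
  have hc1 : c + 1 < n := by omega
  have hcn : c < n := by omega
  have h1 : rN n c * (tN n c * rN n c) * rN n c
      = gN n (c + 1) * gN n c * tN n c * gN n c * gN n (c + 1) * rN n c := by
    rw [← mul_assoc (rN n c) (tN n c) (rN n c), rtrgE hc]
  rw [h1]
  simp only [mul_assoc]
  rw [cancel_left (g2E hc1), cancel_left (g2E hcn)]
  rw [show gN n (c + 1) * (rN n c * (gN n (c + 1) * gN n c))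
      = rN n c * (gN n c * (gN n (c + 1) * gN n c)) from by
    rw [← mul_assoc, grelE hc, mul_assoc]]
  rw [show gN n c * (gN n (c + 1) * gN n c) = gN n (c + 1) from by
    rw [← mul_assoc, ggE c (c + 1), mul_assoc, g2E hcn, mul_one]]
  rw [grelE' hc]
  rw [cancel_left (g2E hcn)]

private theorem push_lemma {M : Type*} [Monoid M] {g1 g2 g' D A m y : M}
    (hD1 : g2 * D = D * g') (hD2 : g1 * D = D * g1)
    (hA1 : A * g2 = g' * A) (hA2 : A * g1 = g1 * A)
    (hcen : g1 * g' * m * g' * g1 = y) :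
    g1 * g2 * (D * m * A) * g2 * g1 = D * y * A := by
  calc g1 * g2 * (D * m * A) * g2 * g1
      = g1 * (g2 * D) * m * (A * g2) * g1 := by simp only [mul_assoc]
    _ = g1 * (D * g') * m * (g' * A) * g1 := by rw [hD1, hA1]
    _ = (g1 * D) * (g' * m * g') * (A * g1) := by simp only [mul_assoc]
    _ = (D * g1) * (g' * m * g') * (g1 * A) := by rw [hD2, hA2]
    _ = D * (g1 * g' * m * g' * g1) * A := by simp only [mul_assoc]
    _ = D * y * A := by rw [hcen]

theorem main_lt {i j : Fin n} (h : (i : ℕ) < (j : ℕ)) :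
    yel n i j = gamE n i * gamE n j * yel n j i * gamE n j * gamE n i := by
  have hj : (j : ℕ) < n := j.isLt
  have hc : (i : ℕ) < n - 1 := by omega
  rw [yel_lt h, yel_gt (i := j) (j := i) h, gamE_eq i, gamE_eq j]
  exact (push_lemma (gD (by omega) hj) (gDc le_rfl (by omega) hj)
    (gA (by omega) hj) (gAc le_rfl (by omega) hj) (central hc)).symm

private theorem conj_flip {M : Type*} [Monoid M] {g h x y : M} (hg : g * g = 1)
    (hh : h * h = 1) (H : x = g * h * y * h * g) : y = h * g * x * g * h := by
  rw [H]
  simp only [mul_assoc]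
  rw [cancel_left hg, cancel_left hh, cancel_left hg, hh, mul_one]

theorem g2gam (k : Fin n) : gamE n k * gamE n k = 1 := by
  rw [gamE_eq]; exact g2E k.isLt

theorem ggGamE (a b : Fin n) : gamE n a * gamE n b = gamE n b * gamE n a := by
  rw [gamE_eq a, gamE_eq b]; exact ggE _ _

theorem yel_adj (i : Fin (n - 1)) :
    yel n (fa i) (fb i) = tN n i * rN n i := by
  rw [yel_lt (show ((fa i : Fin n) : ℕ) < ((fb i : Fin n) : ℕ) from Nat.lt_succ_self _)]
  show DN n (i : ℕ) ((i : ℕ) + 1) * (tN n i * rN n i) * AN n (i : ℕ) ((i : ℕ) + 1)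
    = tN n i * rN n i
  rw [DN_base, AN_base, mul_one, one_mul]

end SingTVB

open SingTVB in
/-- in `STVB n` one has `y_{i,j} = γ_i γ_j y_{j,i} γ_j γ_i` for all `i ≠ j`;
in particular `y_{i,i+1} = γ_i γ_{i+1} y_{i+1,i} γ_i γ_{i+1}`, and `y_{i,i+1}` commutes with
`γ_k` for `k ≠ i, i+1`. -/
theorem stvb_y_gamma_relations (n : ℕ) (hn : 2 ≤ n) :
    (∀ i j : Fin n, i ≠ j →
      yel n i j = gamE n i * gamE n j * yel n j i * gamE n j * gamE n i) ∧
    (∀ i : Fin (n - 1),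
      yel n (fa i) (fb i) =
        gamE n (fa i) * gamE n (fb i) * yel n (fb i) (fa i) * gamE n (fa i) * gamE n (fb i)) ∧
    (∀ i : Fin (n - 1), ∀ k : Fin n, k ≠ fa i → k ≠ fb i →
      yel n (fa i) (fb i) * gamE n k = gamE n k * yel n (fa i) (fb i)) := by

  have part1 : ∀ i j : Fin n, i ≠ j →
      yel n i j = gamE n i * gamE n j * yel n j i * gamE n j * gamE n i := by
    intro i j hij
    rcases Nat.lt_or_ge (i : ℕ) (j : ℕ) with h | h
    · exact main_lt h
    · have h' : (j : ℕ) < (i : ℕ) :=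
        lt_of_le_of_ne h (fun hv => hij (Fin.ext hv.symm))
      exact conj_flip (g2gam j) (g2gam i) (main_lt h')
  refine ⟨part1, ?_, ?_⟩
  · intro i
    have hne : fa i ≠ fb i := fun he => Nat.succ_ne_self i.val (congrArg Fin.val he).symm
    rw [part1 (fa i) (fb i) hne]
    rw [mul_assoc (gamE n (fa i) * gamE n (fb i) * yel n (fb i) (fa i))
      (gamE n (fb i)) (gamE n (fa i)), ggGamE (fb i) (fa i), ← mul_assoc]
  · intro i k hk1 hk2
    have hkv1 : (k : ℕ) ≠ (i : ℕ) := fun h => hk1 (Fin.ext h)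
    have hkv2 : (k : ℕ) ≠ (i : ℕ) + 1 := fun h => hk2 (Fin.ext h)
    have hi : (i : ℕ) < n - 1 := i.isLt
    rw [yel_adj i, gamE_eq k]
    calc tN n (i : ℕ) * rN n (i : ℕ) * gN n (k : ℕ)
        = tN n (i : ℕ) * (rN n (i : ℕ) * gN n (k : ℕ)) := mul_assoc _ _ _
      _ = tN n (i : ℕ) * (gN n (k : ℕ) * rN n (i : ℕ)) := by rw [← grcE hi hkv1 hkv2]
      _ = (tN n (i : ℕ) * gN n (k : ℕ)) * rN n (i : ℕ) := (mul_assoc _ _ _).symm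
      _ = (gN n (k : ℕ) * tN n (i : ℕ)) * rN n (i : ℕ) := by rw [tgcE hi hkv1 hkv2]
      _ = gN n (k : ℕ) * (tN n (i : ℕ) * rN n (i : ℕ)) := mul_assoc _ _ _
end
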